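/- Every p-subgroup Q of a finite group G is contained in a p-radical subgroup R_Q of G, obtained as the eventually constant term of the chain P_0 = Q, P_{i+1} = O_p(N_G(P_i)); moreover N_G(Q) ≤ N_G(R_Q). -/

import Mathlib

open Subgroup

noncomputable section

/-- The `p`-core `O_p(G)`: the largest normal `p`-subgroup of `G`
(defined as the join of all normal `p`-subgroups). -/
def pCore (p : ℕ) (G : Type*) [Group G] : Subgroup G :=
  ⨆ P ∈ {P : Subgroup G | P.Normal ∧ IsPGroup p ↥P}, P

/-- A group has characteristic `p` if `C_G(O_p(G)) ≤ O_p(G)`. -/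
def CharacteristicP (p : ℕ) (G : Type*) [Group G] : Prop :=
  Subgroup.centralizer ((pCore p G : Subgroup G) : Set G) ≤ pCore p G

/-- `G` has local characteristic `p` if the normalizer of every nontrivial
`p`-subgroup has characteristic `p`. -/
def LocalCharacteristicP (p : ℕ) (G : Type*) [Group G] : Prop :=
  ∀ Q : Subgroup G, Q ≠ ⊥ → IsPGroup p ↥Q → CharacteristicP p ↥(normalizer (Q : Set G))

/-- `G` has parabolic characteristic `p` if every `p`-local subgroup containing
a Sylow `p`-subgroup has characteristic `p`. -/
def ParabolicCharacteristicP (p : ℕ) (G : Type*) [Group G] : Prop :=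
  ∀ Q : Subgroup G, Q ≠ ⊥ → IsPGroup p ↥Q →
    (∃ S : Sylow p G, (S : Subgroup G) ≤ normalizer (Q : Set G)) → CharacteristicP p ↥(normalizer (Q : Set G))

/-- A `p`-subgroup `R` is `p`-radical if `R = O_p(N_G(R))`. -/
def IsRadicalPSubgroup (p : ℕ) {G : Type*} [Group G] (R : Subgroup G) : Prop :=
  IsPGroup p ↥R ∧ (pCore p ↥(normalizer (R : Set G))).map (normalizer (R : Set G)).subtype = R

/-- A `p`-subgroup `R` is `p`-centric if `Z(R) = R ⊓ C_G(R)` is a Sylow `p`-subgroup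
of `C_G(R)` (equivalently, in a finite group, a maximal `p`-subgroup of `C_G(R)`). -/
def IsPCentric (p : ℕ) {G : Type*} [Group G] (R : Subgroup G) : Prop :=
  IsPGroup p ↥R ∧
    IsPGroup p ↥(R ⊓ Subgroup.centralizer (R : Set G)) ∧
    ∀ Q : Subgroup G, Q ≤ Subgroup.centralizer (R : Set G) → IsPGroup p ↥Q →
      R ⊓ Subgroup.centralizer (R : Set G) ≤ Q → Q = R ⊓ Subgroup.centralizer (R : Set G)

/-- An element of order `p` is `p`-central if it lies in the center of some
Sylow `p`-subgroup of `G`. -/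
def IsPCentralElement (p : ℕ) {G : Type*} [Group G] (x : G) : Prop :=
  orderOf x = p ∧ ∃ S : Sylow p G, x ∈ (S : Subgroup G) ∧ ∀ y ∈ (S : Subgroup G), x * y = y * x

/-- A `p`-subgroup is purely noncentral if it contains no `p`-central element of `G`. -/
def PurelyNoncentral (p : ℕ) {G : Type*} [Group G] (P : Subgroup G) : Prop :=
  ∀ x ∈ P, ¬ IsPCentralElement p x

/-- Conjugation action of `g` on the group algebra. -/
def conjA {k : Type*} [Semiring k] {G : Type*} [Group G] (g : G) (x : MonoidAlgebra k G) :
    MonoidAlgebra k G :=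
  MonoidAlgebra.single g 1 * x * MonoidAlgebra.single g⁻¹ 1

/-- The relative trace map `Tr_H^G` on the group algebra (summing conjugates over
a set of coset representatives of `H`). -/
def relTr {k : Type*} [Semiring k] {G : Type*} [Group G] (H : Subgroup G)
    (x : MonoidAlgebra k G) : MonoidAlgebra k G :=
  ∑ᶠ q : G ⧸ H, conjA (Quotient.out q) x

/-- A block (idempotent) of `kG`: a primitive central idempotent. -/
def IsBlockOf (k : Type*) [Semiring k] (G : Type*) [Group G] (e : MonoidAlgebra k G) : Prop :=
  e ≠ 0 ∧ e * e = e ∧ (∀ x, e * x = x * e) ∧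
    ∀ f g : MonoidAlgebra k G, (∀ x, f * x = x * f) → (∀ x, g * x = x * g) →
      f * f = f → g * g = g → f * g = 0 → f + g = e → f = 0 ∨ g = 0

/-- `D` is a defect group of the block `e`: `D` is a `p`-subgroup, minimal with the
property that `e` lies in the image of the relative trace map `Tr_D^G` on `D`-fixed points. -/
def IsDefectGroupOf (p : ℕ) (k : Type*) [Semiring k] (G : Type*) [Group G]
    (D : Subgroup G) (e : MonoidAlgebra k G) : Prop :=
  IsPGroup p ↥D ∧
    (∃ x, (∀ h ∈ D, conjA h x = x) ∧ relTr D x = e) ∧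
    ∀ Q : Subgroup G, Q ≤ D → (∃ x, (∀ h ∈ Q, conjA h x = x) ∧ relTr Q x = e) → Q = D

/-- The augmentation map on the group algebra; a block is principal iff its
augmentation is nonzero. -/
def augm {k : Type*} [Semiring k] {G : Type*} [Group G] (x : MonoidAlgebra k G) : k :=
  Finsupp.sum x.coeff fun _ a => a

/-- `E` is subnormal in `G`. -/
def SubnormalIn {G : Type*} [Group G] (E : Subgroup G) : Prop :=
  ∃ (n : ℕ) (f : ℕ → Subgroup G), f 0 = E ∧ f n = ⊤ ∧
    ∀ i < n, f i ≤ f (i + 1) ∧ ((f i).subgroupOf (f (i + 1))).Normal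

/-- A quasisimple group: perfect with simple central quotient. -/
def IsQuasisimpleGroup (H : Type*) [Group H] : Prop :=
  commutator H = ⊤ ∧ IsSimpleGroup (H ⧸ Subgroup.center H)

/-- A component of `G`: a subnormal quasisimple subgroup. -/
def IsComponentOf {G : Type*} [Group G] (E : Subgroup G) : Prop :=
  SubnormalIn E ∧ IsQuasisimpleGroup ↥E

/-- The Fitting subgroup: the join of all nilpotent normal subgroups. -/
def fittingSubgroup (G : Type*) [Group G] : Subgroup G :=
  ⨆ P ∈ {P : Subgroup G | P.Normal ∧ Group.IsNilpotent ↥P}, P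

/-- The generalized Fitting subgroup `F*(G) = F(G)E(G)`. -/
def generalizedFitting (G : Type*) [Group G] : Subgroup G :=
  fittingSubgroup G ⊔ ⨆ E ∈ {E : Subgroup G | IsComponentOf E}, E


/-!
A `p`-subgroup `K` is normal in `N_G(K)`, so `K ≤ O_p(N_G(K))`; and `O_p(N_G(K))` is normal in
`N_G(K)`, so `N_G(K) ≤ N_G(O_p(N_G(K)))`. Hence the chain and its normalizers increase, the chain
is stationary in the finite lattice of subgroups, and its limit `R` satisfies `R = O_p(N_G(R))`.
-/

section PCore

variable {G : Type*} [Group G] {p : ℕ}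

theorem pCore_normal : (pCore p G).Normal :=
  biSup_normal _ id fun _ hP => hP.1

theorem isPGroup_pCore [Finite G] [Fact p.Prime] : IsPGroup p (pCore p G) :=
  Sylow.biSup_of_normal _ id (fun _ hP => hP.2) fun _ hP => hP.1

theorem le_pCore {P : Subgroup G} (hn : P.Normal) (hp : IsPGroup p P) : P ≤ pCore p G :=
  le_iSup₂ (f := fun P _ => P) P ⟨hn, hp⟩

end PCore

theorem le_normalizer_map_subtype {G : Type*} [Group G] {H : Subgroup G} (N : Subgroup H)
    [N.Normal] : H ≤ normalizer (N.map H.subtype : Set G) :=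
  calc H = (⊤ : Subgroup H).map H.subtype := by rw [← MonoidHom.range_eq_map, range_subtype]
    _ = (normalizer (N : Set H)).map H.subtype := by rw [normalizer_eq_top]
    _ ≤ normalizer (N.map H.subtype : Set G) := le_normalizer_map _

/-- `O_p(N_G(K))`, as a subgroup of `G`. -/
def pCoreNormalizer (p : ℕ) {G : Type*} [Group G] (K : Subgroup G) : Subgroup G :=
  (pCore p (normalizer (K : Set G))).map (normalizer (K : Set G)).subtype

section PCoreNormalizer

variable {G : Type*} [Group G] {p : ℕ}

theorem isPGroup_pCoreNormalizer [Finite G] [Fact p.Prime] (K : Subgroup G) :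
    IsPGroup p (pCoreNormalizer p K) :=
  isPGroup_pCore.map _

theorem le_pCoreNormalizer {K : Subgroup G} (hK : IsPGroup p K) : K ≤ pCoreNormalizer p K := by
  have hle : K.subgroupOf (normalizer (K : Set G)) ≤ pCore p (normalizer (K : Set G)) :=
    le_pCore normal_in_normalizer (hK.of_equiv (subgroupOfEquivOfLe le_normalizer).symm)
  calc K = (K.subgroupOf (normalizer (K : Set G))).map (normalizer (K : Set G)).subtype := by
        rw [subgroupOf_map_subtype, inf_eq_left.mpr le_normalizer]
    _ ≤ pCoreNormalizer p K := map_mono hle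

theorem normalizer_le_normalizer_pCoreNormalizer (K : Subgroup G) :
    normalizer (K : Set G) ≤ normalizer (pCoreNormalizer p K : Set G) :=
  have : (pCore p (normalizer (K : Set G))).Normal := pCore_normal
  le_normalizer_map_subtype _

end PCoreNormalizer

theorem stmt3 {G : Type*} [Group G] [Finite G] (p : ℕ) [Fact p.Prime]
    (Q : Subgroup G) (hQ : IsPGroup p ↥Q)
    (F : ℕ → Subgroup G) (hF0 : F 0 = Q)
    (hFs : ∀ n, F (n + 1) = (pCore p ↥(normalizer (F n : Set G))).map (normalizer (F n : Set G)).subtype) :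
    ∃ N, (∀ m, N ≤ m → F m = F N) ∧ IsRadicalPSubgroup p (F N) ∧ Q ≤ F N ∧
      normalizer (Q : Set G) ≤ normalizer (F N : Set G) := by
  have hstep : ∀ n, F (n + 1) = pCoreNormalizer p (F n) := hFs
  have hpGroup : ∀ n, IsPGroup p (F n)
    | 0 => hF0 ▸ hQ
    | n + 1 => hstep n ▸ isPGroup_pCoreNormalizer _
  have hmono : Monotone F :=
    monotone_nat_of_le_succ fun n => hstep n ▸ le_pCoreNormalizer (hpGroup n)
  have hnormalizer : Monotone fun n => normalizer (F n : Set G) :=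
    monotone_nat_of_le_succ fun n => hstep n ▸ normalizer_le_normalizer_pCoreNormalizer _
  obtain ⟨N, hN⟩ := WellFoundedGT.monotone_chain_condition ⟨F, hmono⟩
  refine ⟨N, fun m hm => (hN m hm).symm, ⟨hpGroup N, ?_⟩, hF0 ▸ hmono (Nat.zero_le N),
    hF0 ▸ hnormalizer (Nat.zero_le N)⟩
  exact (hFs N).symm.trans (hN (N + 1) N.le_succ).symm
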